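/- arXiv:1207.4027 — 5 statements merged into one kernel-verified Lean document; each statement's English description precedes it below -/
import Mathlib

section
/- Fix nonnegative integers r, s with r >= 2. For nonnegative integers k, the sum over k of C(s+1, k+1) * C(r-1, k+1) * (k+1)*k/2 equals C(s+1, 2) * C(r+s-2, r-3). -/
/-- The binomial coefficient with integer arguments, equal to 0 when `k < 0` or `k > n`. -/
def intChoose (n k : ℤ) : ℤ := if 0 ≤ k ∧ k ≤ n then Nat.choose n.toNat k.toNat else 0

/-! Choosing the two captains first, `C(n, k) C(k, 2) = C(n, 2) C(n - 2, n - k)`, turns the sum into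
Vandermonde's convolution `∑ₖ C(p, k) C(n - 2, n - k) = C(p + n - 2, n)` with `n = s + 1`,
`p = r - 1`; the symmetry `C(r + s - 2, s + 1) = C(r + s - 2, r - 3)` gives the stated form. -/

open Finset

lemma intChoose_eq_choose_toNat {n k : ℤ} (hk : 0 < k) :
    intChoose n k = (n.toNat.choose k.toNat : ℤ) := by
  unfold intChoose
  split_ifs
  · rfl
  · rw [Nat.choose_eq_zero_of_lt (by omega), Nat.cast_zero]

lemma intChoose_sub (n k : ℤ) : intChoose n (n - k) = intChoose n k := by
  unfold intChoose
  split_ifs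
  · rw [show (n - k).toNat = n.toNat - k.toNat by omega, Nat.choose_symm (by omega)]
  all_goals first | rfl | omega

lemma Int.natCast_succ_choose_two (k : ℕ) :
    (((k + 1).choose 2 : ℕ) : ℤ) = ((k : ℤ) + 1) * k / 2 := by
  rw [Nat.choose_two_right, Int.natCast_ediv]
  push_cast
  ring_nf

lemma finsum_comp_succ_eq_sum_range {M : Type*} [AddCommMonoid M] {f : ℕ → M} (n : ℕ)
    (h₀ : f 0 = 0) (hf : ∀ k, n < k → f k = 0) :
    ∑ᶠ k, f (k + 1) = ∑ k ∈ range (n + 1), f k := by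
  have hsupp : Function.support (fun k ↦ f (k + 1)) ⊆ range n := fun k hk ↦ by
    by_contra hkn
    exact hk (hf _ (by simp at hkn; omega))
  rw [finsum_eq_sum_of_support_subset _ hsupp, sum_range_succ', h₀, add_zero]

lemma Nat.choose_mul_choose_eq_choose_mul_choose_sub {n k : ℕ} (j : ℕ) (hkn : k ≤ n) :
    n.choose k * k.choose j = n.choose j * (n - j).choose (n - k) := by
  rcases lt_or_ge k j with hkj | hjk
  · rw [Nat.choose_eq_zero_of_lt hkj, mul_zero]
    rcases lt_or_ge n j with hnj | hjn
    · rw [Nat.choose_eq_zero_of_lt hnj, zero_mul]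
    · rw [Nat.choose_eq_zero_of_lt (by omega : n - j < n - k), mul_zero]
  · rw [Nat.choose_mul hjk, ← Nat.choose_symm (by omega : k - j ≤ n - j)]
    congr 2
    omega

lemma Nat.sum_range_choose_mul_choose_mul_choose (n p j : ℕ) :
    ∑ k ∈ range (n + 1), n.choose k * p.choose k * k.choose j =
      n.choose j * (n + p - j).choose n := by
  calc ∑ k ∈ range (n + 1), n.choose k * p.choose k * k.choose j
      = ∑ k ∈ range (n + 1), n.choose j * (p.choose k * (n - j).choose (n - k)) :=
        sum_congr rfl fun k hk ↦ by
          rw [mul_right_comm, Nat.choose_mul_choose_eq_choose_mul_choose_sub j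
            (mem_range_succ_iff.1 hk)]
          ring
    _ = n.choose j * (p + (n - j)).choose n := by
        rw [← mul_sum, Nat.add_choose_eq,
          Nat.sum_antidiagonal_eq_sum_range_succ (fun a b ↦ p.choose a * (n - j).choose b)]
    _ = n.choose j * (n + p - j).choose n := by
        rcases lt_or_ge n j with hnj | hjn
        · rw [Nat.choose_eq_zero_of_lt hnj, zero_mul, zero_mul]
        · rw [show p + (n - j) = n + p - j by omega]

/-- For `r ≥ 2`, the sum over all nonnegative integers `k` of
`C(s+1, k+1) * C(r-1, k+1) * (k+1)*k/2` equals `C(s+1, 2) * C(r+s-2, r-3)`. -/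
theorem sum_choose_captains (r s : ℕ) (hr : 2 ≤ r) :
    ∑ᶠ k : ℕ,
      intChoose ((s : ℤ) + 1) ((k : ℤ) + 1) * intChoose ((r : ℤ) - 1) ((k : ℤ) + 1) *
        (((k : ℤ) + 1) * k / 2) =
      intChoose ((s : ℤ) + 1) 2 * intChoose ((r : ℤ) + s - 2) ((r : ℤ) - 3) := by
  have hterm (k : ℕ) :
      intChoose ((s : ℤ) + 1) ((k : ℤ) + 1) * intChoose ((r : ℤ) - 1) ((k : ℤ) + 1) *
        (((k : ℤ) + 1) * k / 2) =
      (((s + 1).choose (k + 1) * (r - 1).choose (k + 1) * (k + 1).choose 2 : ℕ) : ℤ) := by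
    rw [intChoose_eq_choose_toNat (by omega), intChoose_eq_choose_toNat (by omega),
      ← Int.natCast_succ_choose_two]
    push_cast
    congr 4
    omega
  have hrhs : intChoose ((s : ℤ) + 1) 2 * intChoose ((r : ℤ) + s - 2) ((r : ℤ) - 3) =
      (((s + 1).choose 2 * (s + 1 + (r - 1) - 2).choose (s + 1) : ℕ) : ℤ) := by
    rw [show (r : ℤ) - 3 = (r + s - 2) - (s + 1) by ring, intChoose_sub,
      intChoose_eq_choose_toNat (by omega), intChoose_eq_choose_toNat (by omega)]
    push_cast
    congr 4
    omega
  rw [finsum_congr hterm,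
    finsum_comp_succ_eq_sum_range (f := fun j ↦ (((s + 1).choose j * (r - 1).choose j *
      j.choose 2 : ℕ) : ℤ)) (s + 1) (by simp) fun k hk ↦ by simp [Nat.choose_eq_zero_of_lt hk],
    ← Nat.cast_sum, Nat.sum_range_choose_mul_choose_mul_choose, hrhs]
end

section
/- Let r >= 5 and let M be the symmetric matrix indexed by even-size subsets of {1,...,r} with M(S,T) = |S Δ T|/2 - 1 for S ≠ T and M(S,S) = 0, where Δ denotes symmetric difference. Then the matrix B = M - I satisfies B^2 = (q - 2^(r-3)) * J - 2^(r-3) * B, where q = (r^2 - 7r + 16) * 2^(r-5), I is the identity matrix and J is the all-ones matrix. -/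
/-!
Write `ε_i(S) = (-1)^[i ∈ S]` and let `E` be the matrix of signs `E S i = ε_i(S)`. Since
`∑ i, ε_i(S) ε_i(T) = r - 2 |S Δ T|`, the matrix `B = M - I` equals `((r - 4)/4) J - (1/4) E Eᵀ`.
A character sum over even sets shows that for `r ≥ 3` the columns of `E` are pairwise orthogonal,
of squared length `2^(r-1)`, and orthogonal to the all-ones vector. Hence `(E Eᵀ)² = 2^(r-1) E Eᵀ`
and all cross terms with `J` vanish, and squaring `B` gives the quadratic relation.
-/
open Finset Matrix

section CharacterSums

variable {α R : Type*} [Fintype α] [DecidableEq α] [CommRing R]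

theorem compl_nonempty_of_card_lt {A : Finset α} (h : #A < Fintype.card α) :
    Aᶜ.Nonempty := by
  rw [nonempty_iff_ne_empty, Ne, compl_eq_empty_iff]
  rintro rfl
  exact h.ne card_univ

theorem sum_neg_one_pow_card_inter (A : Finset α) :
    ∑ S : Finset α, (-1 : R) ^ #(S ∩ A) = if A = ∅ then 2 ^ Fintype.card α else 0 := by
  have hprod :
      ∏ i, (1 + if i ∈ A then (-1 : R) else 1) = ∑ S : Finset α, (-1 : R) ^ #(S ∩ A) := by
    simp [prod_one_add, powerset_univ]
  rw [← hprod]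
  split_ifs with hA
  · simp [hA, one_add_one_eq_two]
  · obtain ⟨a, ha⟩ := nonempty_iff_ne_empty.2 hA
    exact prod_eq_zero (mem_univ a) (by simp [ha])

theorem two_mul_sum_even_neg_one_pow_card_inter (A : Finset α) :
    2 * ∑ S : {S : Finset α // Even #S}, (-1 : R) ^ #(S.1 ∩ A) =
      ∑ S : Finset α, (-1 : R) ^ #(S ∩ A) + ∑ S : Finset α, (-1 : R) ^ #(S ∩ Aᶜ) := by
  rw [← sum_subtype (univ.filter fun S : Finset α => Even #S) (by simp)
    (fun S => (-1 : R) ^ #(S ∩ A)), sum_filter, mul_sum, ← sum_add_distrib]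
  refine sum_congr rfl fun S _ => ?_
  have hsplit : (-1 : R) ^ #S * (-1) ^ #(S ∩ A) = (-1) ^ #(S ∩ Aᶜ) := by
    rw [← card_inter_add_card_sdiff S A, sdiff_eq_inter_compl, ← pow_add, add_comm, ← add_assoc,
      ← two_mul, pow_add, pow_mul]
    simp
  rcases Nat.even_or_odd #S with h | h
  · rw [if_pos h, ← hsplit, h.neg_one_pow]; ring
  · rw [if_neg (Nat.not_even_iff_odd.2 h), ← hsplit, h.neg_one_pow]; ring

theorem card_even_finset [Nonempty α] :
    Fintype.card {S : Finset α // Even #S} = 2 ^ (Fintype.card α - 1) := by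
  have h := two_mul_sum_even_neg_one_pow_card_inter (α := α) (R := ℤ) ∅
  simp only [inter_empty, card_empty, pow_zero, sum_const, card_univ, nsmul_eq_mul, mul_one,
    Fintype.card_finset, compl_empty, univ_eq_empty_iff, not_isEmpty_of_nonempty,
    sum_neg_one_pow_card_inter, if_false, add_zero] at h
  have h' : 2 * Fintype.card {S : Finset α // Even #S} = 2 ^ Fintype.card α := by exact_mod_cast h
  rw [← Nat.sub_one_add_one (Fintype.card_ne_zero (α := α)), pow_succ] at h'
  omega

theorem sum_even_neg_one_pow_card_inter_eq_zero [NoZeroDivisors R] [CharZero R] {A : Finset α}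
    (hA : A.Nonempty) (hAc : Aᶜ.Nonempty) :
    ∑ S : {S : Finset α // Even #S}, (-1 : R) ^ #(S.1 ∩ A) = 0 := by
  have h := two_mul_sum_even_neg_one_pow_card_inter (R := R) A
  rw [sum_neg_one_pow_card_inter, sum_neg_one_pow_card_inter, if_neg hA.ne_empty,
    if_neg hAc.ne_empty, add_zero, mul_eq_zero] at h
  exact h.resolve_left two_ne_zero

end CharacterSums

theorem sq_eq_of_eq_smul_sub_smul_mul_transpose {m n R : Type*} [Fintype m] [DecidableEq m]
    [Fintype n] [DecidableEq n] [CommRing R] {B J : Matrix m m R} {E : Matrix m n R} {a b N : R}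
    (hB : B = a • J - b • (E * Eᵀ)) (hEE : Eᵀ * E = N • 1) (hJ : Jᵀ = J) (hJE : J * E = 0)
    (hJJ : J * J = N • J) :
    B ^ 2 = (a * (a + b) * N) • J - (b * N) • B := by
  have hEJ : Eᵀ * J = 0 := by rw [← hJ, ← transpose_mul, hJE, transpose_zero]
  have hJEE : J * (E * Eᵀ) = 0 := by rw [← Matrix.mul_assoc, hJE, Matrix.zero_mul]
  have hEEJ : E * Eᵀ * J = 0 := by rw [Matrix.mul_assoc, hEJ, Matrix.mul_zero]
  have hEEEE : E * Eᵀ * (E * Eᵀ) = N • (E * Eᵀ) := by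
    rw [Matrix.mul_assoc, ← Matrix.mul_assoc Eᵀ, hEE, Matrix.smul_mul, Matrix.one_mul,
      Matrix.mul_smul]
  subst hB
  rw [sq]
  simp only [sub_mul, mul_sub, smul_mul_assoc, mul_smul_comm, hJJ, hJEE, hEEJ, hEEEE, smul_zero]
  module

theorem allOnes_mul_allOnes {m R : Type*} [Fintype m] [Semiring R] :
    (of fun _ _ => (1 : R) : Matrix m m R) * of (fun _ _ => 1) =
      (Fintype.card m : R) • of (fun _ _ => 1) := by
  ext; simp [mul_apply]

section EvenSetSigns

variable (α : Type*) [DecidableEq α]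

def evenSetSigns : Matrix {S : Finset α // Even #S} α ℝ :=
  of fun S i => if i ∈ S.1 then -1 else 1

variable {α}

theorem prod_evenSetSigns (S : {S : Finset α // Even #S}) (A : Finset α) :
    ∏ i ∈ A, evenSetSigns α S i = (-1) ^ #(S.1 ∩ A) := by
  simp [evenSetSigns, prod_ite_mem, inter_comm]

variable [Fintype α]

theorem evenSetSigns_mul_transpose_apply (S T : {S : Finset α // Even #S}) :
    (evenSetSigns α * (evenSetSigns α)ᵀ) S T = Fintype.card α - 2 * #(symmDiff S.1 T.1) := by
  have hterm : ∀ i, evenSetSigns α S i * evenSetSigns α T i =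
      1 - 2 * if i ∈ symmDiff S.1 T.1 then 1 else 0 := by
    intro i
    by_cases hS : i ∈ S.1 <;> by_cases hT : i ∈ T.1 <;>
      norm_num [evenSetSigns, hS, hT, mem_symmDiff]
  simp only [mul_apply, transpose_apply, hterm, sum_sub_distrib, ← mul_sum, sum_boole]
  simp [card_univ]

theorem allOnes_mul_evenSetSigns (h : 1 < Fintype.card α) :
    (of fun _ _ => 1 : Matrix {S : Finset α // Even #S} {S : Finset α // Even #S} ℝ) *
      evenSetSigns α = 0 := by
  ext U i
  have hsum := sum_even_neg_one_pow_card_inter_eq_zero (R := ℝ) (singleton_nonempty i)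
    (compl_nonempty_of_card_lt (by rwa [card_singleton]))
  simpa [mul_apply, ← prod_evenSetSigns] using hsum

theorem transpose_evenSetSigns_mul_self (h : 2 < Fintype.card α) :
    (evenSetSigns α)ᵀ * evenSetSigns α = (2 ^ (Fintype.card α - 1) : ℝ) • 1 := by
  have : Nonempty α := Fintype.card_pos_iff.1 (by omega)
  ext i j
  rw [mul_apply, Matrix.smul_apply, one_apply]
  split_ifs with hij
  · subst hij
    have hsq : ∀ S, (evenSetSigns α)ᵀ i S * evenSetSigns α S i = 1 := fun S => by
      by_cases h : i ∈ S.1 <;> simp [evenSetSigns, h]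
    rw [sum_congr rfl fun S _ => hsq S, sum_const, card_univ, card_even_finset, nsmul_one]
    push_cast; ring
  · have hpair : ∀ S, (evenSetSigns α)ᵀ i S * evenSetSigns α S j = (-1) ^ #(S.1 ∩ {i, j}) :=
      fun S => by rw [← prod_evenSetSigns, prod_pair hij, transpose_apply]
    rw [sum_congr rfl fun S _ => hpair S, smul_zero]
    exact sum_even_neg_one_pow_card_inter_eq_zero (insert_nonempty i {j})
      (compl_nonempty_of_card_lt (by rw [card_pair hij]; omega))

end EvenSetSigns

/-- Let `r ≥ 5` and let `M` be the symmetric matrix indexed by even-size subsets of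
`{1,...,r}` with `M(S,T) = |S Δ T|/2 - 1` for `S ≠ T` and `M(S,S) = 0`.
Then `B = M - I` satisfies `B² = (q - 2^(r-3)) J - 2^(r-3) B`,
where `q = (r² - 7r + 16) 2^(r-5)`. -/
theorem typeD_matrix_quadratic (r : ℕ) (hr : 5 ≤ r)
    (M : Matrix {S : Finset (Fin r) // Even S.card} {S : Finset (Fin r) // Even S.card} ℝ)
    (hM : ∀ S T, M S T = if S = T then 0 else ((symmDiff S.1 T.1).card : ℝ) / 2 - 1) :
    (M - 1) ^ 2 =
      (((r : ℝ) ^ 2 - 7 * r + 16) * 2 ^ (r - 5) - 2 ^ (r - 3)) •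
          (Matrix.of fun _ _ => (1 : ℝ)) -
        (2 ^ (r - 3) : ℝ) • (M - 1) := by
  have hB : M - 1 = (((r : ℝ) - 4) / 4) • (of fun _ _ => 1) -
      (1 / 4 : ℝ) • (evenSetSigns (Fin r) * (evenSetSigns (Fin r))ᵀ) := by
    ext S T
    rw [Matrix.sub_apply, hM, Matrix.sub_apply, Matrix.smul_apply, Matrix.smul_apply,
      evenSetSigns_mul_transpose_apply, one_apply, of_apply, Fintype.card_fin, smul_eq_mul,
      smul_eq_mul]
    split_ifs with h
    · rw [h, symmDiff_self, bot_eq_empty, card_empty]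
      ring
    · ring
  have : NeZero r := ⟨by omega⟩
  have hEE := transpose_evenSetSigns_mul_self (α := Fin r) (by rw [Fintype.card_fin]; omega)
  have hJE := allOnes_mul_evenSetSigns (α := Fin r) (by rw [Fintype.card_fin]; omega)
  have hJJ := allOnes_mul_allOnes (m := {S : Finset (Fin r) // Even #S}) (R := ℝ)
  rw [card_even_finset, Nat.cast_pow, Nat.cast_ofNat] at hJJ
  rw [sq_eq_of_eq_smul_sub_smul_mul_transpose hB hEE (by ext; rfl) hJE hJJ]
  obtain ⟨k, rfl⟩ := Nat.exists_eq_add_of_le' hr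
  simp only [Fintype.card_fin, show k + 5 - 1 = k + 4 by omega, show k + 5 - 3 = k + 2 by omega,
    Nat.add_sub_cancel]
  congr 2 <;> push_cast <;> ring
end

section
/- Let r >= 5 and let M be the adjacency matrix of the multigraph C_{2,2,n} on the even subsets of {1,...,r} with weights M(S,T) = |S Δ T|/2 - 1 for S ≠ T. Then the eigenvalues of M are exactly 1 - 2^(r-3), 1, and 1 + (r-4)*2^(r-3), with multiplicities r, 2^(r-1) - (r+1), and 1 respectively. -/
/-!
The weight `M(S,T)` depends only on `S ∆ T`, so `M` is a convolution operator on the group of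
even subsets under `∆`, and is diagonalised by its characters, the Walsh functions
`χ_a(S) = (-1)^|a ∩ S|`. On even sets `χ_a = χ_{aᶜ}`, so the `χ_a` with `a` avoiding a fixed
point form an orthogonal basis. The eigenvalue of `χ_a` is `∑_U w(U) χ_a(U)`; writing
`2|U| = ∑_j (1 - χ_{{j}}(U))` reduces it to character sums over the cube, and it comes out as
`1 + (r-4)2^(r-3)` for `a = ∅`, `1 - 2^(r-3)` for `|a| ∈ {1, r-1}` and `1` otherwise.
Counting the subsets of each kind gives the multiplicities.
-/

open Finset Module Matrix
open scoped symmDiff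

namespace Finset

theorem neg_one_pow_card_symmDiff {α R : Type*} [DecidableEq α] [CommRing R]
    (s t : Finset α) : (-1 : R) ^ #(s ∆ t) = (-1) ^ #s * (-1) ^ #t := by
  have hs := card_sdiff_add_card_inter s t
  have ht := card_sdiff_add_card_inter t s
  rw [symmDiff_def, sup_eq_union, card_union_of_disjoint disjoint_sdiff_sdiff, ← hs, ← ht,
    inter_comm, pow_add, pow_add, pow_add]
  rcases Nat.even_or_odd #(t ∩ s) with h | h <;> simp [h.neg_one_pow]

theorem even_card_symmDiff {α : Type*} [DecidableEq α] {s t : Finset α}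
    (hs : Even #s) (ht : Even #t) : Even #(s ∆ t) := by
  rw [← neg_one_pow_eq_one_iff_even (R := ℤ) (by decide), neg_one_pow_card_symmDiff,
    hs.neg_one_pow, ht.neg_one_pow, one_mul]

theorem sum_ite_eq_singleton {α M : Type*} [Fintype α] [DecidableEq α] [AddCommMonoid M]
    (a : Finset α) (c : M) : ∑ j, (if a = {j} then c else 0) = if #a = 1 then c else 0 := by
  split_ifs with h
  · obtain ⟨j, rfl⟩ := card_eq_one.1 h
    simp
  · exact sum_eq_zero fun j _ => if_neg fun hj => h (by rw [hj, card_singleton])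

variable {β : Type*} [DecidableEq β] (s : Finset β)

theorem card_filter_powerset_eq_empty : #{a ∈ s.powerset | a = ∅} = 1 := by
  simp [filter_eq']

theorem card_filter_powerset_card_eq_one_or_card (hs : #s ≠ 1) :
    #{a ∈ s.powerset | #a = 1 ∨ #a = #s} = #s + 1 := by
  rw [filter_or, card_union_of_disjoint (disjoint_filter.2 fun a _ h => by omega),
    ← powersetCard_eq_filter, ← powersetCard_eq_filter, card_powersetCard, card_powersetCard,
    Nat.choose_one_right, Nat.choose_self]

theorem card_filter_powerset_not_eq_empty_or_card_eq_one_or_card (hs : 2 ≤ #s) :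
    #{a ∈ s.powerset | ¬(a = ∅ ∨ #a = 1 ∨ #a = #s)} = 2 ^ #s - (#s + 2) := by
  have hsplit := card_filter_add_card_filter_not (s := s.powerset)
    fun a => a = ∅ ∨ #a = 1 ∨ #a = #s
  have hspecial : #{a ∈ s.powerset | a = ∅ ∨ #a = 1 ∨ #a = #s} = #s + 2 := by
    rw [filter_or, card_union_of_disjoint (disjoint_filter.2 fun a _ h => by
      rw [h, card_empty]; omega), card_filter_powerset_eq_empty,
      card_filter_powerset_card_eq_one_or_card s (by omega)]
    ring
  rw [card_powerset] at hsplit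
  omega

end Finset

theorem Nat.add_one_lt_two_pow_sub_one {r : ℕ} (hr : 5 ≤ r) : r + 1 < 2 ^ (r - 1) := by
  have h := Nat.lt_two_pow_self (n := r - 2)
  have : 2 ^ (r - 1) = 2 * 2 ^ (r - 2) := by rw [← pow_succ']; congr 1; omega
  omega

namespace Module.End

variable {ι K V : Type*} [Field K] [AddCommGroup V] [Module K V]

theorem eigenspace_eq_span_of_basis [Fintype ι] (b : Basis ι K V) {f : End K V} {d : ι → K}
    (hf : ∀ i, f (b i) = d i • b i) (μ : K) :
    f.eigenspace μ = Submodule.span K (Set.range fun i : {i // d i = μ} => b i) := by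
  refine le_antisymm (fun v hv => ?_) ?_
  · have hsum : ∑ i, (b.repr v i * (d i - μ)) • b i = 0 :=
      calc ∑ i, (b.repr v i * (d i - μ)) • b i
          = f (∑ i, b.repr v i • b i) - μ • ∑ i, b.repr v i • b i := by
            simp only [map_sum, map_smul, hf, smul_sum, ← sum_sub_distrib, mul_sub, sub_smul,
              mul_smul, smul_comm μ]
        _ = 0 := by rw [b.sum_repr, mem_eigenspace_iff.1 hv, sub_self]
    have hcoef := Fintype.linearIndependent_iff.1 b.linearIndependent _ hsum
    rw [← b.sum_repr v]
    refine Submodule.sum_mem _ fun i _ => ?_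
    by_cases hi : d i = μ
    · exact Submodule.smul_mem _ _ (Submodule.subset_span ⟨⟨i, hi⟩, rfl⟩)
    · simp [(mul_eq_zero.1 (hcoef i)).resolve_right (sub_ne_zero.2 hi)]
  · rw [Submodule.span_le]
    rintro _ ⟨⟨i, rfl⟩, rfl⟩
    exact mem_eigenspace_iff.2 (hf i)

theorem finrank_eigenspace_of_basis [Fintype ι] (b : Basis ι K V) {f : End K V} {d : ι → K}
    (hf : ∀ i, f (b i) = d i • b i) (μ : K) :
    finrank K (f.eigenspace μ) = Nat.card {i // d i = μ} := by
  classical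
  rw [eigenspace_eq_span_of_basis b hf, finrank_span_eq_card, Nat.card_eq_fintype_card]
  exact b.linearIndependent.comp _ Subtype.val_injective

theorem hasEigenvalue_iff_finrank_ne_zero [FiniteDimensional K V] (f : End K V) (μ : K) :
    f.HasEigenvalue μ ↔ finrank K (f.eigenspace μ) ≠ 0 := by
  rw [hasEigenvalue_iff]
  exact Submodule.finrank_eq_zero.not.symm

end Module.End

section Walsh

variable {α : Type*} [DecidableEq α]

def walsh (a s : Finset α) : ℝ := (-1) ^ #(a ∩ s)

theorem walsh_comm (a s : Finset α) : walsh a s = walsh s a := by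
  rw [walsh, walsh, inter_comm]

theorem walsh_symmDiff_right (a s t : Finset α) :
    walsh a (s ∆ t) = walsh a s * walsh a t := by
  rw [walsh, ← inf_eq_inter, inf_symmDiff_distrib_left, neg_one_pow_card_symmDiff]; rfl

theorem walsh_symmDiff_left (a b s : Finset α) :
    walsh (a ∆ b) s = walsh a s * walsh b s := by
  simp only [walsh_comm _ s, walsh_symmDiff_right]

@[simp] theorem walsh_empty_left (s : Finset α) : walsh ∅ s = 1 := by simp [walsh]

@[simp] theorem walsh_empty_right (a : Finset α) : walsh a ∅ = 1 := by simp [walsh]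

theorem walsh_singleton_left (j : α) (s : Finset α) :
    walsh {j} s = if j ∈ s then -1 else 1 := by
  by_cases h : j ∈ s <;> simp [walsh, h]

abbrev EvenFinset (α : Type*) := {s : Finset α // Even #s}

def walshVec (a : Finset α) : EvenFinset α → ℝ := fun s => walsh a s

def symmDiffPerm (s : EvenFinset α) : Equiv.Perm (EvenFinset α) :=
  Function.Involutive.toPerm (fun t => ⟨s.1 ∆ t.1, even_card_symmDiff s.2 t.2⟩)
    fun t => Subtype.ext (symmDiff_symmDiff_cancel_left s.1 t.1)

@[simp] theorem coe_symmDiffPerm (s t : EvenFinset α) : (symmDiffPerm s t).1 = s.1 ∆ t.1 := rfl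

def walshEigenvalue (n : ℕ) (a : Finset α) : ℝ :=
  if a = ∅ then 1 + ((n : ℝ) - 4) * 2 ^ (n - 3)
  else if #a = 1 ∨ #a = n - 1 then 1 - 2 ^ (n - 3) else 1

theorem walshEigenvalue_mem (n : ℕ) (a : Finset α) :
    walshEigenvalue n a = 1 - 2 ^ (n - 3) ∨ walshEigenvalue n a = 1 ∨
      walshEigenvalue n a = 1 + ((n : ℝ) - 4) * 2 ^ (n - 3) := by
  unfold walshEigenvalue
  split_ifs <;> simp

section walshEigenvalue

variable {n : ℕ} (hn : 5 ≤ n) (a : Finset α)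
include hn

theorem walshEigenvalue_eq_iff_eq_empty :
    walshEigenvalue n a = 1 + ((n : ℝ) - 4) * 2 ^ (n - 3) ↔ a = ∅ := by
  have hp : (0 : ℝ) < 2 ^ (n - 3) := by positivity
  have hn' : (5 : ℝ) ≤ n := by exact_mod_cast hn
  unfold walshEigenvalue
  split_ifs with h0 hQ
  · simp [h0]
  · simp only [h0, iff_false]; nlinarith
  · simp only [h0, iff_false]; nlinarith

theorem walshEigenvalue_eq_one_sub_iff :
    walshEigenvalue n a = 1 - 2 ^ (n - 3) ↔ #a = 1 ∨ #a = n - 1 := by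
  have hp : (0 : ℝ) < 2 ^ (n - 3) := by positivity
  have hn' : (5 : ℝ) ≤ n := by exact_mod_cast hn
  unfold walshEigenvalue
  split_ifs with h0 hQ
  · have : ¬(#a = 1 ∨ #a = n - 1) := by rw [h0, card_empty]; omega
    simp only [this, iff_false]; nlinarith
  · simp [hQ]
  · simp only [hQ, iff_false]; linarith

theorem walshEigenvalue_eq_one_iff :
    walshEigenvalue n a = 1 ↔ ¬(a = ∅ ∨ #a = 1 ∨ #a = n - 1) := by
  have hp : (0 : ℝ) < 2 ^ (n - 3) := by positivity
  have hn' : (5 : ℝ) ≤ n := by exact_mod_cast hn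
  unfold walshEigenvalue
  split_ifs with h0 hQ
  · simp only [h0, true_or, not_true, iff_false]; nlinarith
  · simp only [hQ, or_true, not_true, iff_false]; linarith
  · simp [h0, hQ]

end walshEigenvalue

variable [Fintype α]

theorem walsh_compl_left (a s : Finset α) : walsh aᶜ s = (-1) ^ #s * walsh a s := by
  have : aᶜ = a ∆ univ := by ext; simp [mem_symmDiff]
  rw [this, walsh_symmDiff_left, mul_comm, walsh, univ_inter]

theorem sum_walsh (a : Finset α) :
    ∑ s, walsh a s = if a = ∅ then 2 ^ Fintype.card α else 0 := by
  split_ifs with ha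
  · simp [ha, Fintype.card_finset]
  · obtain ⟨j, hj⟩ := nonempty_iff_ne_empty.2 ha
    have hflip : ∑ s, walsh a s = -∑ s, walsh a s :=
      calc ∑ s, walsh a s
          = ∑ s, walsh a (s ∆ {j}) :=
            (Equiv.sum_comp (Function.Involutive.toPerm (fun s : Finset α => s ∆ {j})
              fun s => symmDiff_symmDiff_cancel_right {j} s) (walsh a)).symm
        _ = -∑ s, walsh a s := by
            simp [walsh_symmDiff_right, walsh_comm a {j}, walsh_singleton_left, hj]
    linarith

theorem two_mul_card_eq_sum_walsh_singleton (s : Finset α) :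
    2 * (#s : ℝ) = ∑ j, (1 - walsh {j} s) := by
  have h (j : α) : 1 - walsh {j} s = 2 * if j ∈ s then 1 else 0 := by
    rw [walsh_singleton_left]; split_ifs <;> norm_num
  simp [h, mul_comm]

theorem two_mul_sum_card_mul_walsh (a : Finset α) :
    2 * ∑ s, (#s : ℝ) * walsh a s = 2 ^ Fintype.card α *
      (Fintype.card α * (if a = ∅ then 1 else 0) - if #a = 1 then 1 else 0) :=
  calc 2 * ∑ s, (#s : ℝ) * walsh a s
      = ∑ j, (∑ s, walsh a s - ∑ s, walsh (a ∆ {j}) s) := by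
        simp only [mul_sum, ← mul_assoc, two_mul_card_eq_sum_walsh_singleton, sum_mul,
          walsh_symmDiff_left, ← sum_sub_distrib, sub_mul, one_mul, mul_comm (walsh {_} _)]
        exact sum_comm
    _ = _ := by
        simp only [sum_walsh, symmDiff_eq_empty, sum_sub_distrib, sum_const, card_univ,
          nsmul_eq_mul, sum_ite_eq_singleton]
        split_ifs <;> ring

omit [DecidableEq α] in
theorem sum_evenFinset (f : Finset α → ℝ) :
    ∑ s : EvenFinset α, f s = (∑ s, f s + ∑ s, (-1) ^ #s * f s) / 2 := by
  rw [← sum_subtype (univ.filter fun s : Finset α => Even #s) (by simp), sum_filter,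
    ← sum_add_distrib, sum_div]
  refine sum_congr rfl fun s _ => ?_
  rcases Nat.even_or_odd #s with h | h
  · rw [if_pos h, h.neg_one_pow]; ring
  · rw [if_neg (Nat.not_even_iff_odd.2 h), h.neg_one_pow]; ring

theorem sum_evenFinset_walsh (a : Finset α) :
    ∑ s : EvenFinset α, walsh a s =
      2 ^ Fintype.card α * ((if a = ∅ then 1 else 0) + if a = univ then 1 else 0) / 2 := by
  simp only [sum_evenFinset, ← walsh_compl_left, sum_walsh, compl_eq_empty_iff]
  split_ifs <;> ring

theorem four_mul_sum_evenFinset_card_mul_walsh (a : Finset α) :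
    4 * ∑ s : EvenFinset α, (#s.1 : ℝ) * walsh a s = 2 ^ Fintype.card α *
      (Fintype.card α * ((if a = ∅ then 1 else 0) + if a = univ then 1 else 0) -
        (if #a = 1 then 1 else 0) - if #aᶜ = 1 then 1 else 0) := by
  have hT := two_mul_sum_card_mul_walsh a
  have hTc := two_mul_sum_card_mul_walsh aᶜ
  simp only [compl_eq_empty_iff] at hTc
  have hflip (s : Finset α) : (-1) ^ #s * (#s * walsh a s) = #s * walsh aᶜ s := by
    rw [walsh_compl_left]; ring
  rw [sum_evenFinset (fun s => #s * walsh a s)]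
  simp only [hflip]
  linear_combination hT + hTc

theorem mulVec_walshVec (w : Finset α → ℝ) (a : Finset α) :
    of (fun s t : EvenFinset α => w (s.1 ∆ t.1)) *ᵥ walshVec a =
      (∑ u : EvenFinset α, w u * walsh a u) • walshVec a := by
  ext s
  rw [mulVec, dotProduct, ← Equiv.sum_comp (symmDiffPerm s), Pi.smul_apply, smul_eq_mul,
    sum_mul]
  refine sum_congr rfl fun u _ => ?_
  simp only [of_apply, walshVec, coe_symmDiffPerm, symmDiff_symmDiff_cancel_left,
    walsh_symmDiff_right]
  ring

theorem sum_evenFinset_weight_mul_walsh (hα : 3 ≤ Fintype.card α) {a : Finset α}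
    (ha : a ≠ univ) :
    ∑ u : EvenFinset α, (if u.1 = ∅ then 0 else (#u.1 : ℝ) / 2 - 1) * walsh a u =
      walshEigenvalue (Fintype.card α) a := by
  rw [walshEigenvalue]
  have hsplit (u : EvenFinset α) :
      (if u.1 = ∅ then 0 else (#u.1 : ℝ) / 2 - 1) * walsh a u =
        #u.1 * walsh a u / 2 - walsh a u + if u = ⟨∅, by simp⟩ then 1 else 0 := by
    by_cases hu : u.1 = ∅
    · simp [hu, Subtype.ext_iff]
    · simp [hu, Subtype.ext_iff]; ring
  have hcard := four_mul_sum_evenFinset_card_mul_walsh a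
  have hsum := sum_evenFinset_walsh a
  have hpow : (2 : ℝ) ^ Fintype.card α = 8 * 2 ^ (Fintype.card α - 3) := by
    rw [show (8 : ℝ) = 2 ^ 3 by norm_num, ← pow_add, Nat.add_sub_cancel' hα]
  have hcompl : #aᶜ = 1 ↔ #a = Fintype.card α - 1 := by
    rw [card_compl]; have := card_le_univ a; omega
  simp only [hsplit, sum_add_distrib, sum_sub_distrib, ← sum_div, sum_ite_eq', mem_univ, if_true,
    if_neg ha, add_zero, hcompl] at hcard hsum ⊢
  rw [hpow] at hcard hsum
  obtain rfl | h0 := eq_or_ne a ∅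
  · have : 0 ≠ Fintype.card α - 1 := by omega
    simp only [card_empty, if_true, zero_ne_one, this, if_false, false_or] at hcard hsum ⊢
    linarith
  · have : ¬ (#a = 1 ∧ #a = Fintype.card α - 1) := by omega
    simp only [h0, if_false] at hcard hsum ⊢
    split_ifs at hcard ⊢ <;> first | tauto | linarith

theorem dotProduct_walshVec {x₀ : α} {a b : Finset α} (ha : x₀ ∉ a) (hb : x₀ ∉ b) :
    walshVec a ⬝ᵥ walshVec b = if a = b then 2 ^ Fintype.card α / 2 else 0 := by
  have hab : a ∆ b ≠ univ := fun h => by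
    simpa [mem_symmDiff, ha, hb] using (h ▸ mem_univ x₀ : x₀ ∈ a ∆ b)
  simp only [dotProduct, walshVec, ← walsh_symmDiff_left, sum_evenFinset_walsh, symmDiff_eq_empty,
    if_neg hab]
  split_ifs <;> ring

theorem linearIndependent_walshVec (x₀ : α) :
    LinearIndependent ℝ fun a : {a : Finset α // x₀ ∉ a} => walshVec a.1 := by
  rw [Fintype.linearIndependent_iff]
  intro g hg b
  have h := congrArg (· ⬝ᵥ walshVec b.1) hg
  simp only [sum_dotProduct, smul_dotProduct, zero_dotProduct, smul_eq_mul] at h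
  rw [sum_congr rfl fun x _ => by rw [dotProduct_walshVec x.2 b.2]] at h
  simp only [Subtype.coe_inj, mul_ite, mul_zero, sum_ite_eq', mem_univ, if_true] at h
  exact (mul_eq_zero.1 h).resolve_right (by positivity)

theorem card_evenFinset [Nonempty α] :
    Fintype.card (EvenFinset α) = 2 ^ (Fintype.card α - 1) := by
  have h := sum_evenFinset_walsh (∅ : Finset α)
  have hpow : (2 : ℝ) ^ Fintype.card α = 2 * 2 ^ (Fintype.card α - 1) := by
    rw [← pow_succ', Nat.sub_add_cancel Fintype.card_pos]
  simp only [walsh_empty_left, sum_const, card_univ, nsmul_eq_mul, mul_one, if_true,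
    univ_nonempty.ne_empty.symm, if_false, add_zero, hpow] at h
  rw [mul_div_cancel_left₀ _ two_ne_zero] at h
  exact_mod_cast h

theorem filter_notMem_eq_powerset_erase (x₀ : α) :
    ({a | x₀ ∉ a} : Finset (Finset α)) = (univ.erase x₀).powerset := by
  ext a; simp only [mem_filter, mem_univ, true_and, mem_powerset, subset_erase, subset_univ]

theorem card_subtype_notMem (x₀ : α) :
    Fintype.card {a : Finset α // x₀ ∉ a} = 2 ^ (Fintype.card α - 1) := by
  rw [Fintype.card_subtype, filter_notMem_eq_powerset_erase, card_powerset,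
    card_erase_of_mem (mem_univ x₀), card_univ]

noncomputable def walshBasis (x₀ : α) : Basis {a : Finset α // x₀ ∉ a} ℝ (EvenFinset α → ℝ) :=
  haveI : Nonempty {a : Finset α // x₀ ∉ a} := ⟨⟨∅, notMem_empty x₀⟩⟩
  haveI : Nonempty α := ⟨x₀⟩
  basisOfLinearIndependentOfCardEqFinrank (linearIndependent_walshVec x₀) (by
    rw [finrank_fintype_fun_eq_card, card_subtype_notMem, card_evenFinset])

@[simp] theorem walshBasis_apply (x₀ : α) (a : {a : Finset α // x₀ ∉ a}) :
    walshBasis x₀ a = walshVec a.1 := by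
  simp [walshBasis]

section weightMatrix

variable {M : Matrix (EvenFinset α) (EvenFinset α) ℝ}
  (hM : ∀ s t, M s t = if s = t then 0 else (#(s.1 ∆ t.1) : ℝ) / 2 - 1)
include hM

theorem toLin'_walshBasis (hα : 3 ≤ Fintype.card α) (x₀ : α) (a : {a : Finset α // x₀ ∉ a}) :
    toLin' M (walshBasis x₀ a) = walshEigenvalue (Fintype.card α) a.1 • walshBasis x₀ a := by
  have hMw : M = of fun s t => if s.1 ∆ t.1 = ∅ then 0 else (#(s.1 ∆ t.1) : ℝ) / 2 - 1 := by
    ext s t; simp [hM, Subtype.ext_iff]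
  have ha : a.1 ≠ univ := fun h => a.2 (h ▸ mem_univ x₀)
  rw [walshBasis_apply, toLin'_apply, hMw,
    mulVec_walshVec (fun u => if u = ∅ then 0 else (#u : ℝ) / 2 - 1),
    sum_evenFinset_weight_mul_walsh hα ha]

theorem finrank_eigenspace_toLin' (hα : 3 ≤ Fintype.card α) (x₀ : α) (μ : ℝ) :
    finrank ℝ (End.eigenspace (toLin' M) μ) =
      #{a ∈ (univ.erase x₀).powerset | walshEigenvalue (Fintype.card α) a = μ} := by
  rw [End.finrank_eigenspace_of_basis (walshBasis x₀) (toLin'_walshBasis hM hα x₀),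
    Nat.card_congr (Equiv.subtypeSubtypeEquivSubtypeInter (x₀ ∉ ·)
      (walshEigenvalue (Fintype.card α) · = μ)), Nat.card_eq_fintype_card,
    Fintype.card_subtype, ← filter_filter, filter_notMem_eq_powerset_erase]

end weightMatrix

end Walsh

/-- Let `r ≥ 5` and let `M` be the adjacency matrix of the multigraph `C_{2,2,n}` on the
even subsets of `{1,...,r}` with weights `M(S,T) = |S Δ T|/2 - 1` for `S ≠ T`.
Then the eigenvalues of `M` are exactly `1 - 2^(r-3)`, `1` and `1 + (r-4)2^(r-3)`,
with multiplicities `r`, `2^(r-1) - (r+1)` and `1` respectively. -/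
theorem typeD_spectrum (r : ℕ) (hr : 5 ≤ r)
    (M : Matrix {S : Finset (Fin r) // Even S.card} {S : Finset (Fin r) // Even S.card} ℝ)
    (hM : ∀ S T, M S T = if S = T then 0 else ((symmDiff S.1 T.1).card : ℝ) / 2 - 1) :
    (∀ μ : ℝ, Module.End.HasEigenvalue (Matrix.toLin' M) μ ↔
        (μ = 1 - 2 ^ (r - 3) ∨ μ = 1 ∨ μ = 1 + ((r : ℝ) - 4) * 2 ^ (r - 3))) ∧
      Module.finrank ℝ (Module.End.eigenspace (Matrix.toLin' M) (1 - 2 ^ (r - 3))) = r ∧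
      Module.finrank ℝ (Module.End.eigenspace (Matrix.toLin' M) 1) = 2 ^ (r - 1) - (r + 1) ∧
      Module.finrank ℝ
          (Module.End.eigenspace (Matrix.toLin' M) (1 + ((r : ℝ) - 4) * 2 ^ (r - 3))) = 1 := by
  let x₀ : Fin r := ⟨0, by omega⟩
  have hdim := finrank_eigenspace_toLin' hM (by simp; omega) x₀
  simp only [Fintype.card_fin] at hdim
  have hs : #(univ.erase x₀) = r - 1 := by simp
  have h₁ : finrank ℝ (End.eigenspace (toLin' M) (1 - 2 ^ (r - 3))) = r := by
    rw [hdim, filter_congr fun a _ => walshEigenvalue_eq_one_sub_iff hr a, ← hs,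
      card_filter_powerset_card_eq_one_or_card _ (by omega), hs]
    omega
  have h₂ : finrank ℝ (End.eigenspace (toLin' M) 1) = 2 ^ (r - 1) - (r + 1) := by
    rw [hdim, filter_congr fun a _ => walshEigenvalue_eq_one_iff hr a, ← hs,
      card_filter_powerset_not_eq_empty_or_card_eq_one_or_card _ (by omega), hs]
    omega
  have h₃ : finrank ℝ (End.eigenspace (toLin' M) (1 + ((r : ℝ) - 4) * 2 ^ (r - 3))) = 1 := by
    rw [hdim, filter_congr fun a _ => walshEigenvalue_eq_iff_eq_empty hr a,
      card_filter_powerset_eq_empty]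
  refine ⟨fun μ => ?_, h₁, h₂, h₃⟩
  rw [End.hasEigenvalue_iff_finrank_ne_zero]
  constructor
  · intro h
    rw [hdim] at h
    obtain ⟨a, ha⟩ := card_ne_zero.1 h
    obtain ⟨-, rfl⟩ := mem_filter.1 ha
    exact walshEigenvalue_mem r a
  · rintro (rfl | rfl | rfl)
    · omega
    · have := Nat.add_one_lt_two_pow_sub_one hr; omega
    · omega
end

section
/- Let r, s be positive integers and let B be the matrix indexed by (r-1)-element subsets of {1,...,r+s} with entries B(S,T) = |S \ T| - 1 (including the diagonal, where B(S,S) = -1). Then B^2 = λ B + η J where λ = -C(r+s-2, r-2), η = s^2*C(r+s-2, r-3) - s*C(r+s-2, r-2) + C(r+s-2, r-1), and J is the all-ones matrix. -/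
/-! For `k`-sets, `|S \ U| = k - |S ∩ U|`, so `(B²)(S,T) = ∑_U (k-1-|S ∩ U|)(k-1-|T ∩ U|)`.
Double counting over points and over pairs of points gives `∑_U |S ∩ U| = k·C(n-1,k-1)` and
`∑_U |S ∩ U||T ∩ U| = |S ∩ T|·C(n-1,k-1) + (k² - |S ∩ T|)·C(n-2,k-2)`, so each entry is affine
in `|S \ T|`. Pascal's rule and the absorption identity `j·C(m,j) = (m-j+1)·C(m,j-1)` turn the
coefficients into `λ` and `η`. Binomials are taken with integer arguments throughout, so that
`C(n-2,k-2)` correctly vanishes for `k = 1`. -/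

open Finset

lemma intChoose_natCast (n k : ℕ) : intChoose n k = n.choose k := by
  unfold intChoose
  split_ifs with h
  · simp
  · rw [Nat.choose_eq_zero_of_lt (by omega), Nat.cast_zero]

lemma intChoose_of_neg {n k : ℤ} (hk : k < 0) : intChoose n k = 0 := if_neg (by omega)

lemma intChoose_of_lt {n k : ℤ} (h : n < k) : intChoose n k = 0 := if_neg (by omega)

lemma intChoose_succ {n : ℤ} (hn : 0 ≤ n) (k : ℤ) :
    intChoose (n + 1) k = intChoose n (k - 1) + intChoose n k := by
  lift n to ℕ using hn
  rcases lt_or_ge k 0 with hk | hk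
  · rw [intChoose_of_neg hk, intChoose_of_neg hk, intChoose_of_neg (by omega), add_zero]
  obtain ⟨k, rfl⟩ := Int.eq_ofNat_of_zero_le hk
  rw [← Nat.cast_succ, intChoose_natCast, intChoose_natCast]
  cases k with
  | zero => simp [intChoose_of_neg]
  | succ k =>
    rw [Nat.cast_succ k, add_sub_cancel_right, intChoose_natCast, Nat.choose_succ_succ,
      Nat.cast_add]

lemma mul_intChoose (n k : ℤ) : k * intChoose n k = (n - k + 1) * intChoose n (k - 1) := by
  rcases le_or_gt k 0 with hk | hk
  · rw [intChoose_of_neg (by omega : k - 1 < 0), mul_zero]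
    rcases hk.lt_or_eq with hk | rfl
    · rw [intChoose_of_neg hk, mul_zero]
    · rw [zero_mul]
  obtain ⟨j, rfl⟩ : ∃ j : ℕ, k = j + 1 := ⟨(k - 1).toNat, by omega⟩
  rw [add_sub_cancel_right]
  rcases lt_or_ge n j with hnj | hjn
  · rw [intChoose_of_lt hnj, intChoose_of_lt (by omega), mul_zero, mul_zero]
  lift n to ℕ using (j.cast_nonneg.trans hjn)
  have hjn : j ≤ n := by exact_mod_cast hjn
  have h := congrArg (Nat.cast : ℕ → ℤ) (Nat.choose_succ_right_eq n j)
  push_cast [hjn] at h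
  rw [← Nat.cast_succ, intChoose_natCast, intChoose_natCast]
  push_cast
  linear_combination h

lemma intChoose_quadratic_identity (n k d : ℤ) (hn : 2 ≤ n) :
    (k - 1) ^ 2 * intChoose n k - 2 * (k - 1) * k * intChoose (n - 1) (k - 1) +
        (k - d) * intChoose (n - 1) (k - 1) + (k ^ 2 - k + d) * intChoose (n - 2) (k - 2) =
      -intChoose (n - 2) (k - 1) * (d - 1) +
        ((n - k - 1) ^ 2 * intChoose (n - 2) (k - 2) - (n - k - 1) * intChoose (n - 2) (k - 1) +
          intChoose (n - 2) k) := by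
  obtain ⟨m, rfl⟩ : ∃ m, n = m + 2 := ⟨n - 2, by ring⟩
  obtain ⟨j, rfl⟩ : ∃ j, k = j + 1 := ⟨k - 1, by ring⟩
  have hm : 0 ≤ m := by omega
  simp only [add_sub_cancel_right, show m + 2 - 1 = m + 1 by ring,
    show j + 1 - 2 = j - 1 by ring] at *
  have p₁ := intChoose_succ (by omega : 0 ≤ m + 1) (j + 1)
  have p₂ := intChoose_succ hm j
  have p₃ := intChoose_succ hm (j + 1)
  have a₁ := mul_intChoose m j
  have a₂ := mul_intChoose m (j + 1)
  rw [add_assoc, one_add_one_eq_two] at p₁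
  simp only [add_sub_cancel_right, show m - (j + 1) + 1 = m - j by ring] at p₁ p₃ a₂
  -- By Pascal both sides are combinations of `C(m,j-1)`, `C(m,j)`, `C(m,j+1)`; their difference
  -- is `(m-j-1)·a₁ + (j-1)·a₂`.
  linear_combination j ^ 2 * p₁ + (-j ^ 2 - j + 1 - d) * p₂ + j ^ 2 * p₃ + (m - j - 1) * a₁ +
    (j - 1) * a₂

lemma natCast_card_inter {α : Type*} [DecidableEq α] (X U : Finset α) :
    (#(X ∩ U) : ℤ) = ∑ x ∈ X, if x ∈ U then 1 else 0 := by
  rw [← filter_mem_eq_inter, natCast_card_filter]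

section KSubsets

variable {α : Type*} [Fintype α] [DecidableEq α]

lemma card_filter_powersetCard_univ_superset (A : Finset α) (k : ℕ) :
    (#{U ∈ powersetCard k univ | A ⊆ U} : ℤ) =
      intChoose (Fintype.card α - #A) (k - #A) := by
  by_cases hAk : #A ≤ k
  · rw [card_filter_powersetCard_subset A univ k (subset_univ A) hAk, card_univ,
      ← intChoose_natCast, Nat.cast_sub (card_le_univ A), Nat.cast_sub hAk]
  · rw [intChoose_of_neg (by omega), filter_eq_empty_iff.mpr, card_empty, Nat.cast_zero]
    intro U hU hAU
    exact hAk ((card_le_card hAU).trans (mem_powersetCard.mp hU).2.le)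

lemma sum_powersetCard_card_inter (X : Finset α) (k : ℕ) :
    ∑ U ∈ powersetCard k univ, (#(X ∩ U) : ℤ) =
      #X * intChoose (Fintype.card α - 1) (k - 1) := by
  simp_rw [natCast_card_inter]
  rw [sum_comm, ← nsmul_eq_mul, ← sum_const]
  refine sum_congr rfl fun x _ => ?_
  rw [← natCast_card_filter]
  simpa using card_filter_powersetCard_univ_superset {x} k

lemma sum_powersetCard_card_inter_mul_card_inter (S T : Finset α) (k : ℕ) :
    ∑ U ∈ powersetCard k univ, (#(S ∩ U) : ℤ) * #(T ∩ U) =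
      #(S ∩ T) * intChoose (Fintype.card α - 1) (k - 1) +
        (#S * #T - #(S ∩ T)) * intChoose (Fintype.card α - 2) (k - 2) := by
  set c₁ := intChoose (Fintype.card α - 1) (k - 1)
  set c₂ := intChoose (Fintype.card α - 2) (k - 2)
  have pair_count : ∀ x y : α, ∑ U ∈ powersetCard k univ,
      (if x ∈ U ∧ y ∈ U then 1 else 0 : ℤ) = c₂ + if x = y then c₁ - c₂ else 0 := by
    intro x y
    rw [← natCast_card_filter]
    have := card_filter_powersetCard_univ_superset {x, y} k
    simp only [insert_subset_iff, singleton_subset_iff] at this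
    rw [this]
    by_cases hxy : x = y
    · simp [hxy, c₁]
    · simp [hxy, card_pair hxy, c₂]
  calc ∑ U ∈ powersetCard k univ, (#(S ∩ U) : ℤ) * #(T ∩ U)
      = ∑ x ∈ S, ∑ y ∈ T, ∑ U ∈ powersetCard k univ, (if x ∈ U ∧ y ∈ U then 1 else 0 : ℤ) := by
        simp_rw [natCast_card_inter, sum_mul_sum, ite_zero_mul_ite_zero, mul_one]
        rw [sum_comm]
        exact sum_congr rfl fun x _ => sum_comm
    _ = ∑ x ∈ S, (#T * c₂ + if x ∈ T then c₁ - c₂ else 0) := by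
        simp_rw [pair_count, sum_add_distrib, sum_const, nsmul_eq_mul, sum_ite_eq]
    _ = _ := by
        rw [sum_add_distrib, sum_const, nsmul_eq_mul, sum_ite_mem, sum_const, nsmul_eq_mul]
        ring

theorem sum_powersetCard_card_sdiff_sub_one_mul (hn : 2 ≤ Fintype.card α) {k : ℕ}
    {S T : Finset α} (hS : #S = k) (hT : #T = k) :
    ∑ U ∈ powersetCard k univ, ((#(S \ U) : ℤ) - 1) * (#(U \ T) - 1) =
      -intChoose (Fintype.card α - 2) (k - 1) * (#(S \ T) - 1) +
        ((Fintype.card α - k - 1) ^ 2 * intChoose (Fintype.card α - 2) (k - 2) -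
          (Fintype.card α - k - 1) * intChoose (Fintype.card α - 2) (k - 1) +
          intChoose (Fintype.card α - 2) k) := by
  have expand : ∀ U ∈ powersetCard k univ, ((#(S \ U) : ℤ) - 1) * (#(U \ T) - 1) =
      (k - 1) ^ 2 - (k - 1) * #(S ∩ U) - (k - 1) * #(T ∩ U) + #(S ∩ U) * #(T ∩ U) := by
    intro U hU
    have hU : #U = k := (mem_powersetCard.mp hU).2
    have hSU := card_sdiff_add_card_inter S U
    have hUT := card_sdiff_add_card_inter U T
    rw [inter_comm] at hUT
    have hSU' : (#(S \ U) : ℤ) = k - #(S ∩ U) := by omega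
    have hUT' : (#(U \ T) : ℤ) = k - #(T ∩ U) := by omega
    rw [hSU', hUT']
    ring
  have hST := card_sdiff_add_card_inter S T
  rw [sum_congr rfl expand]
  simp only [sum_add_distrib, sum_sub_distrib, sum_const, ← mul_sum, card_powersetCard, card_univ,
    sum_powersetCard_card_inter, sum_powersetCard_card_inter_mul_card_inter, hS, hT, nsmul_eq_mul,
    ← intChoose_natCast]
  rw [show (#(S ∩ T) : ℤ) = k - #(S \ T) by omega]
  linear_combination
    intChoose_quadratic_identity (Fintype.card α) k #(S \ T) (by exact_mod_cast hn)

theorem sq_eq_of_apply_eq_card_sdiff_sub_one (hn : 2 ≤ Fintype.card α) (k : ℕ)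
    (B : Matrix {S : Finset α // #S = k} {S : Finset α // #S = k} ℝ)
    (hB : ∀ S T, B S T = (#(S.1 \ T.1) : ℝ) - 1) :
    B ^ 2 = (-intChoose (Fintype.card α - 2) (k - 1) : ℝ) • B +
      (((Fintype.card α - k - 1) ^ 2 * intChoose (Fintype.card α - 2) (k - 2) -
          (Fintype.card α - k - 1) * intChoose (Fintype.card α - 2) (k - 1) +
          intChoose (Fintype.card α - 2) k : ℤ) : ℝ) • Matrix.of fun _ _ => 1 := by
  ext S T
  have h := congrArg (Int.cast : ℤ → ℝ) (sum_powersetCard_card_sdiff_sub_one_mul hn S.2 T.2)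
  rw [sum_subtype _ fun U => mem_powersetCard_univ] at h
  push_cast at h
  simp only [sq, Matrix.mul_apply, hB, Matrix.add_apply, Matrix.smul_apply, Matrix.of_apply,
    smul_eq_mul, mul_one]
  push_cast
  linear_combination h

end KSubsets

theorem typeA_matrix_quadratic_general (r s : ℕ) (hr : 2 ≤ r)
    (B : Matrix {S : Finset (Fin (r + s)) // S.card = r - 1}
      {S : Finset (Fin (r + s)) // S.card = r - 1} ℝ)
    (hB : ∀ S T, B S T = ((S.1 \ T.1).card : ℝ) - 1) :
    B ^ 2 = (-(intChoose ((r : ℤ) + s - 2) ((r : ℤ) - 2) : ℝ)) • B +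
      (((s : ℝ) ^ 2 * (intChoose ((r : ℤ) + s - 2) ((r : ℤ) - 3) : ℝ) -
          (s : ℝ) * (intChoose ((r : ℤ) + s - 2) ((r : ℤ) - 2) : ℝ) +
          (intChoose ((r : ℤ) + s - 2) ((r : ℤ) - 1) : ℝ))) •
        (Matrix.of fun _ _ => (1 : ℝ)) := by
  have h := sq_eq_of_apply_eq_card_sdiff_sub_one (by simp; omega) (r - 1) B hB
  have hk : ((r - 1 : ℕ) : ℤ) = r - 1 := by omega
  simp only [Fintype.card_fin, Nat.cast_add, hk, show (r : ℤ) - 1 - 1 = r - 2 by ring,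
    show (r : ℤ) - 1 - 2 = r - 3 by ring, show (r : ℤ) + s - (r - 1) - 1 = s by ring] at h
  push_cast at h
  exact h

/-- Let `r, s` be positive integers with `r ≥ 2` and let `B` be the matrix indexed by the
`(r-1)`-element subsets of `{1,...,r+s}` with entries `B(S,T) = |S \ T| - 1`
(so `B(S,S) = -1`).  Then `B² = λB + ηJ` where `λ = -C(r+s-2, r-2)` and
`η = s²C(r+s-2, r-3) - sC(r+s-2, r-2) + C(r+s-2, r-1)`. -/
theorem typeA_matrix_quadratic (r s : ℕ) (hr : 2 ≤ r) (hs : 1 ≤ s)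
    (B : Matrix {S : Finset (Fin (r + s)) // S.card = r - 1}
      {S : Finset (Fin (r + s)) // S.card = r - 1} ℝ)
    (hB : ∀ S T, B S T = ((S.1 \ T.1).card : ℝ) - 1) :
    B ^ 2 = (-(intChoose ((r : ℤ) + s - 2) ((r : ℤ) - 2) : ℝ)) • B +
      (((s : ℝ) ^ 2 * (intChoose ((r : ℤ) + s - 2) ((r : ℤ) - 3) : ℝ) -
          (s : ℝ) * (intChoose ((r : ℤ) + s - 2) ((r : ℤ) - 2) : ℝ) +
          (intChoose ((r : ℤ) + s - 2) ((r : ℤ) - 1) : ℝ))) •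
        (Matrix.of fun _ _ => (1 : ℝ)) :=
  typeA_matrix_quadratic_general r s hr B hB
end

section
/- Let G be a transitive multigraph with adjacency matrix M and let λ1 be the smallest eigenvalue of M. Then the optimal value of the dual semidefinite program SD*(G) equals (1/2) * Σ_{i<j} M(i,j) - |V| * λ1 / 4. -/
/-!
If `M + diag γ` is positive semidefinite, so is `M + diag (γ ∘ σ)` for every automorphism `σ` of
`M`. Averaging over the automorphism group, which acts transitively, turns `γ` into the constant
`(∑ γ) / |V|`, and `M + c • 1` is positive semidefinite exactly when `-c ≤ λ₁`. Hence
`∑ γ ≥ -|V| λ₁`, with equality for `γ = -λ₁`.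
-/

open Matrix Module End MulAction

theorem MulAction.sum_smul_eq_sum_smul {G α M : Type*} [Group G] [Fintype G] [MulAction G α]
    [IsPretransitive G α] [AddCommMonoid M] (f : α → M) (a b : α) :
    ∑ g : G, f (g • a) = ∑ g : G, f (g • b) := by
  obtain ⟨h, rfl⟩ := exists_smul_eq G b a
  simp_rw [smul_smul]
  exact Fintype.sum_equiv (Equiv.mulRight h) _ _ fun _ => rfl

theorem MulAction.card_smul_sum_smul {G α M : Type*} [Group G] [Fintype G] [MulAction G α]
    [IsPretransitive G α] [Fintype α] [AddCommMonoid M] (f : α → M) (a : α) :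
    Fintype.card α • ∑ g : G, f (g • a) = Fintype.card G • ∑ x, f x := calc
  Fintype.card α • ∑ g : G, f (g • a) = ∑ b : α, ∑ g : G, f (g • b) := by
    rw [← Finset.card_univ, ← Finset.sum_const]
    exact Finset.sum_congr rfl fun b _ => sum_smul_eq_sum_smul f a b
  _ = ∑ g : G, ∑ b : α, f (g • b) := Finset.sum_comm
  _ = ∑ _g : G, ∑ x, f x :=
    Finset.sum_congr rfl fun g _ => Fintype.sum_bijective _ (MulAction.bijective g) _ _ fun _ => rfl
  _ = Fintype.card G • ∑ x, f x := by rw [Finset.sum_const, Finset.card_univ]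

namespace Matrix

variable {n α : Type*}

def autGroup (A : Matrix n n α) : Subgroup (Equiv.Perm n) where
  carrier := {σ | A.submatrix σ σ = A}
  mul_mem' {σ τ} hσ hτ := by
    simp only [Set.mem_ofPred_eq, Equiv.Perm.coe_mul] at *
    rw [← submatrix_submatrix, hσ, hτ]
  one_mem' := submatrix_id_id A
  inv_mem' {σ} hσ := by
    simp only [Set.mem_ofPred_eq] at *
    conv_lhs => rw [← hσ]
    simp [submatrix_submatrix]

theorem mem_autGroup {A : Matrix n n α} {σ : Equiv.Perm n} :
    σ ∈ A.autGroup ↔ ∀ i j, A (σ i) (σ j) = A i j := by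
  simp [autGroup, ← Matrix.ext_iff]

variable [DecidableEq n]

theorem PosSemidef.add_diagonal_comp {A : Matrix n n ℝ} {γ : n → ℝ}
    (h : (A + diagonal γ).PosSemidef) {σ : Equiv.Perm n} (hσ : σ ∈ A.autGroup) :
    (A + diagonal (γ ∘ σ)).PosSemidef := by
  have hσ' : A.submatrix σ σ = A := hσ
  simpa [submatrix_add, hσ', submatrix_diagonal_equiv] using h.submatrix σ

variable [Fintype n]

theorem PosSemidef.add_smul_one_of_add_diagonal {A : Matrix n n ℝ} {γ : n → ℝ}
    [IsPretransitive A.autGroup n] (h : (A + diagonal γ).PosSemidef) :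
    (A + ((∑ i, γ i) / Fintype.card n) • 1).PosSemidef := by
  classical
  set G := A.autGroup
  have hG : (0 : ℝ) < Fintype.card G := by exact_mod_cast Fintype.card_pos
  have havg (i : n) : ∑ g : G, γ (g • i) = Fintype.card G * ((∑ i, γ i) / Fintype.card n) := by
    have hn : (Fintype.card n : ℝ) ≠ 0 := by
      exact_mod_cast (Fintype.card_pos_iff.mpr ⟨i⟩).ne'
    have := card_smul_sum_smul γ i (G := G)
    rw [nsmul_eq_mul, nsmul_eq_mul] at this
    field_simp
    linarith
  have hsum : ∑ g : G, (A + diagonal (γ ∘ g)) =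
      (Fintype.card G : ℝ) • (A + ((∑ i, γ i) / Fintype.card n) • 1) := by
    ext i j
    rcases eq_or_ne i j with rfl | hij
    · simp only [sum_apply, add_apply, diagonal_apply_eq, Function.comp_apply,
        Finset.sum_add_distrib, Finset.sum_const, Finset.card_univ, nsmul_eq_mul, smul_apply,
        one_apply_eq, smul_eq_mul, mul_one]
      rw [mul_add, ← havg i]
      rfl
    · simp [sum_apply, hij]
  have hpsd := posSemidef_sum Finset.univ fun (g : G) _ => h.add_diagonal_comp g.2
  rw [hsum] at hpsd
  simpa [hG.ne'] using hpsd.smul (inv_nonneg.mpr hG.le)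

theorem IsHermitian.posSemidef_iff_hasEigenvalue_nonneg {A : Matrix n n ℝ}
    (hA : A.IsHermitian) :
    A.PosSemidef ↔ ∀ μ, HasEigenvalue A.toLin' μ → 0 ≤ μ := by
  simp only [posSemidef_iff_isHermitian_and_spectrum_nonneg, hasEigenvalue_iff_mem_spectrum,
    spectrum_toLin', hA, true_and, Set.subset_def, Set.mem_ofPred_eq]

theorem IsHermitian.posSemidef_add_smul_one_iff {A : Matrix n n ℝ}
    (hA : A.IsHermitian) (c : ℝ) :
    (A + c • 1).PosSemidef ↔ ∀ μ, HasEigenvalue A.toLin' μ → -c ≤ μ := by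
  have hAc : (A + c • 1).IsHermitian := hA.add (isHermitian_one.smul (.all c))
  rw [hAc.posSemidef_iff_hasEigenvalue_nonneg, map_add, map_smul, toLin'_one]
  constructor
  · intro h μ hμ
    have := h (μ + c) (by rwa [hasEigenvalue_add_iff, add_sub_cancel_right])
    linarith
  · intro h μ hμ
    have := h (μ - c) (hasEigenvalue_add_iff.mp hμ)
    linarith

end Matrix

theorem dual_sdp_transitive_general (n : ℕ) (M : Matrix (Fin n) (Fin n) ℝ)
    (hsymm : M.IsSymm)
    (htrans : ∀ i j : Fin n, ∃ σ : Equiv.Perm (Fin n),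
      (∀ x y, M (σ x) (σ y) = M x y) ∧ σ i = j)
    (lam1 : ℝ) (heig : Module.End.HasEigenvalue (Matrix.toLin' M) lam1)
    (hmin : ∀ μ : ℝ, Module.End.HasEigenvalue (Matrix.toLin' M) μ → lam1 ≤ μ) :
    IsLeast
      {v : ℝ | ∃ γ : Fin n → ℝ, (M + Matrix.diagonal γ).PosSemidef ∧
        v = (1 / 2) * ∑ i, ∑ j ∈ Finset.Ioi i, M i j + (1 / 4) * ∑ i, γ i}
      ((1 / 2) * ∑ i, ∑ j ∈ Finset.Ioi i, M i j - (n : ℝ) * lam1 / 4) := by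
  have hM : M.IsHermitian := isHermitian_iff_isSymm.mpr hsymm
  have : IsPretransitive M.autGroup (Fin n) := ⟨fun i j => by
    obtain ⟨σ, hσ, rfl⟩ := htrans i j
    exact ⟨⟨σ, mem_autGroup.mpr hσ⟩, rfl⟩⟩
  refine ⟨⟨fun _ => -lam1, ?_, ?_⟩, ?_⟩
  · rw [← smul_one_eq_diagonal, hM.posSemidef_add_smul_one_iff]
    simpa using hmin
  · simp only [Finset.sum_const, Finset.card_univ, Fintype.card_fin, nsmul_eq_mul]
    ring
  · rintro _ ⟨γ, hγ, rfl⟩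
    obtain rfl | hn := Nat.eq_zero_or_pos n
    · simp
    have hbound := (hM.posSemidef_add_smul_one_iff _).mp hγ.add_smul_one_of_add_diagonal lam1 heig
    rw [Fintype.card_fin, neg_le, le_div_iff₀ (by exact_mod_cast hn)] at hbound
    linarith

/-- Let `G` be a transitive multigraph with adjacency matrix `M` (symmetric, nonnegative,
zero diagonal) and let `λ₁` be the smallest eigenvalue of `M`.  Then the optimal value of
the dual semidefinite program `SD*(G) = min {(1/2)Σ_{i<j} M(i,j) + (1/4)Σᵢ γᵢ :
M + diag(γ) ⪰ 0}` equals `(1/2)Σ_{i<j} M(i,j) - |V|λ₁/4`. -/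
theorem dual_sdp_transitive (n : ℕ) (M : Matrix (Fin n) (Fin n) ℝ)
    (hsymm : M.IsSymm) (hnn : ∀ i j, 0 ≤ M i j) (hdiag : ∀ i, M i i = 0)
    (htrans : ∀ i j : Fin n, ∃ σ : Equiv.Perm (Fin n),
      (∀ x y, M (σ x) (σ y) = M x y) ∧ σ i = j)
    (lam1 : ℝ) (heig : Module.End.HasEigenvalue (Matrix.toLin' M) lam1)
    (hmin : ∀ μ : ℝ, Module.End.HasEigenvalue (Matrix.toLin' M) μ → lam1 ≤ μ) :
    IsLeast
      {v : ℝ | ∃ γ : Fin n → ℝ, (M + Matrix.diagonal γ).PosSemidef ∧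
        v = (1 / 2) * ∑ i, ∑ j ∈ Finset.Ioi i, M i j + (1 / 4) * ∑ i, γ i}
      ((1 / 2) * ∑ i, ∑ j ∈ Finset.Ioi i, M i j - (n : ℝ) * lam1 / 4) :=
  dual_sdp_transitive_general n M hsymm htrans lam1 heig hmin
end
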